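/- For every field F, the universal grading group functor R : tilde{GrAlg_F} → Grp has no left adjoint. -/

import Mathlib

set_option autoImplicit false

universe u

/-- A group grading on a (not necessarily unital) associative algebra over `F`:
an object of the category `GrAlg_F`. -/
structure GrAlg (F : Type u) [Field F] : Type (u + 1) where
  A : Type u
  [ringA : NonUnitalRing A]
  [modA : Module F A]
  [sccA : SMulCommClass F A A]
  [istA : IsScalarTower F A A]
  G : Type u
  [grpG : Group G]
  comp : G → Submodule F A
  mul_mem : ∀ ⦃g h : G⦄ ⦃a b : A⦄, a ∈ comp g → b ∈ comp h → a * b ∈ comp (g * h)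
  independent : iSupIndep comp
  spans : (⨆ g, comp g) = ⊤

attribute [instance] GrAlg.ringA GrAlg.modA GrAlg.sccA GrAlg.istA GrAlg.grpG

variable {F : Type u} [Field F]

/-- The grading is trivial if all components other than the identity component vanish. -/
def GrAlg.IsTrivialGrading (X : GrAlg F) : Prop := ∀ g : X.G, g ≠ 1 → X.comp g = ⊥

/-- The support of a grading. -/
def GrAlg.supp (X : GrAlg F) : Set X.G := {g | X.comp g ≠ ⊥}

/-- A morphism in `GrAlg_F`: an algebra homomorphism mapping each graded component
into some graded component. -/
@[ext]
structure GrAlgHom (X Y : GrAlg F) where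
  hom : X.A →ₙₐ[F] Y.A
  graded : ∀ g : X.G, ∃ h : Y.G, ∀ a ∈ X.comp g, hom a ∈ Y.comp h

def GrAlgHom.id (X : GrAlg F) : GrAlgHom X X where
  hom := NonUnitalAlgHom.id F X.A
  graded g := ⟨g, fun a ha => ha⟩

def GrAlgHom.comp {X Y Z : GrAlg F} (g : GrAlgHom Y Z) (f : GrAlgHom X Y) :
    GrAlgHom X Z where
  hom := g.hom.comp f.hom
  graded s := by
    obtain ⟨h, hh⟩ := f.graded s
    obtain ⟨k, hk⟩ := g.graded h
    exact ⟨k, fun a ha => by simpa using hk _ (hh a ha)⟩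

/-- An object of `GrAlg¹_F`: a group grading on a unital associative algebra. -/
structure GrAlgOne (F : Type u) [Field F] extends GrAlg F : Type (u + 1) where
  one : A
  one_mul : ∀ a : A, one * a = a
  mul_one : ∀ a : A, a * one = a

/-- A morphism in `GrAlg¹_F`: a unital graded algebra homomorphism. -/
@[ext]
structure GrAlgOneHom (X Y : GrAlgOne F) extends GrAlgHom X.toGrAlg Y.toGrAlg where
  map_one : toGrAlgHom.hom X.one = Y.one

def GrAlgOneHom.id (X : GrAlgOne F) : GrAlgOneHom X X where
  toGrAlgHom := GrAlgHom.id X.toGrAlg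
  map_one := rfl

def GrAlgOneHom.comp {X Y Z : GrAlgOne F} (g : GrAlgOneHom Y Z) (f : GrAlgOneHom X Y) :
    GrAlgOneHom X Z where
  toGrAlgHom := g.toGrAlgHom.comp f.toGrAlgHom
  map_one := by
    show (g.toGrAlgHom.hom.comp f.toGrAlgHom.hom) X.one = Z.one
    simp [f.map_one, g.map_one]

/-- A morphism in `tilde{GrAlg_F}`: a graded injective homomorphism. -/
@[ext]
structure TGrAlgHom (X Y : GrAlg F) extends GrAlgHom X Y where
  injOn : ∀ g : X.G, Set.InjOn toGrAlgHom.hom (X.comp g)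

def TGrAlgHom.id (X : GrAlg F) : TGrAlgHom X X where
  toGrAlgHom := GrAlgHom.id X
  injOn g := fun a _ b _ hab => hab

def TGrAlgHom.comp {X Y Z : GrAlg F} (g : TGrAlgHom Y Z) (f : TGrAlgHom X Y) :
    TGrAlgHom X Z where
  toGrAlgHom := g.toGrAlgHom.comp f.toGrAlgHom
  injOn s := by
    intro a ha b hb hab
    obtain ⟨h, hh⟩ := f.graded s
    exact f.injOn s ha hb (g.injOn h (hh a ha) (hh b hb) (by exact hab))

/-- A morphism in `tilde{GrAlg¹_F}`: a unital graded injective homomorphism. -/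
@[ext]
structure TGrAlgOneHom (X Y : GrAlgOne F) extends TGrAlgHom X.toGrAlg Y.toGrAlg where
  map_one : toGrAlgHom.hom X.one = Y.one

def TGrAlgOneHom.id (X : GrAlgOne F) : TGrAlgOneHom X X where
  toTGrAlgHom := TGrAlgHom.id X.toGrAlg
  map_one := rfl

def TGrAlgOneHom.comp {X Y Z : GrAlgOne F} (g : TGrAlgOneHom Y Z) (f : TGrAlgOneHom X Y) :
    TGrAlgOneHom X Z where
  toTGrAlgHom := g.toTGrAlgHom.comp f.toTGrAlgHom
  map_one := by
    show (g.toGrAlgHom.hom.comp f.toGrAlgHom.hom) X.one = Z.one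
    simp [f.map_one, g.map_one]
/-- The defining relations of the universal group of a grading: the words
`[g][h][gh]⁻¹` for `g, h` in the support with `A^(g)·A^(h) ≠ 0`. -/
def GrAlg.univRels (X : GrAlg F) : Set (FreeGroup X.supp) :=
  { w | ∃ (g h : X.supp) (hgh : g.1 * h.1 ∈ X.supp),
      (∃ a ∈ X.comp g.1, ∃ b ∈ X.comp h.1, a * b ≠ 0) ∧
      w = FreeGroup.of g * FreeGroup.of h *
          (FreeGroup.of (⟨g.1 * h.1, hgh⟩ : X.supp))⁻¹ }

/-- The universal group of a grading, presented as the quotient of the free group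
on the support by the normal closure of the relations `[g][h][gh]⁻¹`. -/
def GrAlg.univGroup (X : GrAlg F) : Type u :=
  FreeGroup X.supp ⧸ Subgroup.normalClosure X.univRels

noncomputable instance (X : GrAlg F) : Group X.univGroup :=
  inferInstanceAs (Group (FreeGroup X.supp ⧸ Subgroup.normalClosure X.univRels))
lemma GrAlg.eq_of_mem_comp (X : GrAlg F) {a : X.A} {g h : X.G} (ha : a ≠ 0)
    (h1 : a ∈ X.comp g) (h2 : a ∈ X.comp h) : g = h := by
  by_contra hne
  have hd : Disjoint (X.comp g) (X.comp h) :=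
    (X.independent g).mono_right
      (le_iSup₂ (f := fun (j : X.G) (_ : j ≠ g) => X.comp j) h (Ne.symm hne))
  exact ha (Submodule.disjoint_def.mp hd a h1 h2)

namespace TGrAlgHom

variable {X Y : GrAlg F} (f : TGrAlgHom X Y)

/-- The component of `Y` into which the component `X.comp s` is mapped. -/
noncomputable def targ (s : X.supp) : Y.G := (f.graded s.1).choose

lemma targ_spec (s : X.supp) : ∀ a ∈ X.comp s.1, f.hom a ∈ Y.comp (f.targ s) :=
  (f.graded s.1).choose_spec

lemma hom_ne_zero (s : X.supp) {a : X.A} (ha : a ∈ X.comp s.1) (hne : a ≠ 0) :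
    f.hom a ≠ 0 := by
  intro h0
  exact hne (f.injOn s.1 ha (Submodule.zero_mem _) (by simpa using h0))

lemma targ_mem (s : X.supp) : f.targ s ∈ Y.supp := by
  obtain ⟨a, ha, hne⟩ := Submodule.exists_mem_ne_zero_of_ne_bot s.2
  exact Submodule.ne_bot_iff _ |>.mpr ⟨f.hom a, f.targ_spec s a ha, f.hom_ne_zero s ha hne⟩

/-- The lift of the support map to the free group on the support. -/
noncomputable def univMapAux : FreeGroup X.supp →* Y.univGroup :=
  FreeGroup.lift fun s =>
    (QuotientGroup.mk (FreeGroup.of (⟨f.targ s, f.targ_mem s⟩ : Y.supp)) : Y.univGroup)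

lemma univMapAux_rels : ∀ w ∈ X.univRels, f.univMapAux w = 1 := by
  rintro w ⟨g, h, hgh, ⟨a, ha, b, hb, hab⟩, rfl⟩
  have habmem : a * b ∈ X.comp (g.1 * h.1) := X.mul_mem ha hb
  have hfa : f.hom a ∈ Y.comp (f.targ g) := f.targ_spec g a ha
  have hfb : f.hom b ∈ Y.comp (f.targ h) := f.targ_spec h b hb
  have hfab : f.hom (a * b) ∈ Y.comp (f.targ g * f.targ h) := by
    rw [map_mul]
    exact Y.mul_mem hfa hfb
  have hfabne : f.hom (a * b) ≠ 0 := f.hom_ne_zero ⟨g.1 * h.1, hgh⟩ habmem hab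
  have key : f.targ ⟨g.1 * h.1, hgh⟩ = f.targ g * f.targ h :=
    Y.eq_of_mem_comp hfabne (f.targ_spec ⟨g.1 * h.1, hgh⟩ _ habmem) hfab
  have hmem : f.targ g * f.targ h ∈ Y.supp := key ▸ f.targ_mem ⟨g.1 * h.1, hgh⟩
  have hrel : FreeGroup.of (⟨f.targ g, f.targ_mem g⟩ : Y.supp) *
      FreeGroup.of (⟨f.targ h, f.targ_mem h⟩ : Y.supp) *
      (FreeGroup.of (⟨f.targ g * f.targ h, hmem⟩ : Y.supp))⁻¹ ∈ Y.univRels := by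
    refine ⟨⟨f.targ g, f.targ_mem g⟩, ⟨f.targ h, f.targ_mem h⟩, hmem,
      ⟨f.hom a, hfa, f.hom b, hfb, ?_⟩, rfl⟩
    rw [← map_mul]
    exact hfabne
  have heq : (⟨f.targ ⟨g.1 * h.1, hgh⟩, f.targ_mem _⟩ : Y.supp) =
      (⟨f.targ g * f.targ h, hmem⟩ : Y.supp) := Subtype.ext key
  show (FreeGroup.lift (fun s => (QuotientGroup.mk (FreeGroup.of (⟨f.targ s, f.targ_mem s⟩ : Y.supp)) :
    FreeGroup Y.supp ⧸ Subgroup.normalClosure Y.univRels))) _ = 1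
  simp only [map_mul, map_inv, FreeGroup.lift_apply_of, heq]
  rw [← QuotientGroup.mk_inv, ← QuotientGroup.mk_mul, ← QuotientGroup.mk_mul,
    QuotientGroup.eq_one_iff]
  exact Subgroup.subset_normalClosure hrel

/-- The universal grading group functor `R` on morphisms. -/
noncomputable def univMap : X.univGroup →* Y.univGroup :=
  QuotientGroup.lift _ f.univMapAux (by
    intro w hw
    have : Subgroup.normalClosure X.univRels ≤ f.univMapAux.ker :=
      Subgroup.normalClosure_le_normal fun w hw => f.univMapAux_rels w hw
    exact this hw)

end TGrAlgHom

/-- The universal grading group functor `R₁` on morphisms. -/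
noncomputable def TGrAlgOneHom.univMap {X Y : GrAlgOne F} (f : TGrAlgOneHom X Y) :
    X.univGroup →* Y.univGroup :=
  f.toTGrAlgHom.univMap
section Statement

variable (F : Type u) [Field F]

/-- The data of a left adjoint to the universal grading group functor
`R : tilde{GrAlg_F} → Grp`: a functor `K` from groups to graded algebras together with a
bijection `Hom(K H, X) ≃ Hom(H, R X)` natural in both variables. -/
structure LeftAdjointDataR (F : Type u) [Field F] where
  K : ∀ (H : Type u) [Group H], GrAlg F
  Kmap : ∀ {H₁ H₂ : Type u} [Group H₁] [Group H₂], (H₁ →* H₂) → TGrAlgHom (K H₁) (K H₂)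
  Kmap_id : ∀ (H : Type u) [Group H], Kmap (MonoidHom.id H) = TGrAlgHom.id (K H)
  Kmap_comp : ∀ {H₁ H₂ H₃ : Type u} [Group H₁] [Group H₂] [Group H₃]
    (f : H₁ →* H₂) (g : H₂ →* H₃), Kmap (g.comp f) = (Kmap g).comp (Kmap f)
  θ : ∀ (H : Type u) [Group H] (X : GrAlg F), TGrAlgHom (K H) X ≃ (H →* X.univGroup)
  θ_nat_left : ∀ {H₁ H₂ : Type u} [Group H₁] [Group H₂] (f : H₁ →* H₂) (X : GrAlg F)
    (u : TGrAlgHom (K H₂) X), θ H₁ X (u.comp (Kmap f)) = (θ H₂ X u).comp f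
  θ_nat_right : ∀ (H : Type u) [Group H] {X Y : GrAlg F} (v : TGrAlgHom X Y)
    (u : TGrAlgHom (K H) X), θ H Y (v.comp u) = v.univMap.comp (θ H X u)

/-!
A left adjoint `K` would give `Hom(K H, X) ≃ Hom(H, R X)` for every group `H`. Taking for `X`
the zero algebra, the right-hand side contains the trivial homomorphism, and a graded injective
map into the zero algebra kills every component, so `K H` is the zero algebra. Hence
`Hom(K H, X)` has at most one element for every `X`, and so does `Hom(H, R X)`. This fails for
`H = R X` as soon as `R X` is nontrivial, e.g. for the line `F` with zero multiplication, whose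
universal group is free on one generator because no product of homogeneous elements is nonzero.
-/

variable {F}

namespace GrAlg

lemma subsingleton_of_forall_comp_eq_bot (X : GrAlg F) (h : ∀ g, X.comp g = ⊥) :
    Subsingleton X.A := by
  have hbot_eq_top : (⊥ : Submodule F X.A) = ⊤ := by
    rw [← X.spans, eq_comm, iSup_eq_bot]
    exact h
  exact (Submodule.subsingleton_iff F).mp (subsingleton_iff_bot_eq_top.mp hbot_eq_top)

lemma nontrivial_univGroup_of_univRels_eq_empty (X : GrAlg F) (hX : X.univRels = ∅)
    (s : X.supp) : Nontrivial X.univGroup := by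
  refine ⟨⟨QuotientGroup.mk (FreeGroup.of s), 1, fun h => ?_⟩⟩
  replace h := (QuotientGroup.eq_one_iff _).mp h
  rw [hX, Subgroup.normalClosure_empty, Subgroup.mem_bot] at h
  exact FreeGroup.of_ne_one s h

end GrAlg

lemma TGrAlgHom.comp_eq_bot {X Y : GrAlg F} [Subsingleton Y.A] (f : TGrAlgHom X Y) (g : X.G) :
    X.comp g = ⊥ :=
  (Submodule.eq_bot_iff _).mpr fun _ ha =>
    f.injOn g ha (Submodule.zero_mem _) (Subsingleton.elim _ _)

instance TGrAlgHom.subsingleton {X Y : GrAlg F} [Subsingleton X.A] :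
    Subsingleton (TGrAlgHom X Y) :=
  ⟨fun f g => TGrAlgHom.ext <| NonUnitalAlgHom.ext fun a => by
    rw [Subsingleton.elim a 0, map_zero, map_zero]⟩

variable (F)

def GrAlg.zero : GrAlg F where
  A := PUnit
  G := PUnit
  comp _ := ⊥
  mul_mem _ _ _ _ ha _ := ha
  independent := iSupIndep_subsingleton _
  spans := Subsingleton.elim _ _

instance : Subsingleton (GrAlg.zero F).A := inferInstanceAs (Subsingleton PUnit)

def ZeroMulAlg : Type u := F

instance : AddCommGroup (ZeroMulAlg F) := inferInstanceAs (AddCommGroup F)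
instance : Module F (ZeroMulAlg F) := inferInstanceAs (Module F F)
instance : Nontrivial (ZeroMulAlg F) := inferInstanceAs (Nontrivial F)

instance : NonUnitalRing (ZeroMulAlg F) where
  mul _ _ := 0
  left_distrib _ _ _ := (add_zero 0).symm
  right_distrib _ _ _ := (add_zero 0).symm
  zero_mul _ := rfl
  mul_zero _ := rfl
  mul_assoc _ _ _ := rfl

lemma ZeroMulAlg.mul_eq_zero (a b : ZeroMulAlg F) : a * b = 0 := rfl

instance : SMulCommClass F (ZeroMulAlg F) (ZeroMulAlg F) := ⟨fun c _ _ => smul_zero c⟩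

instance : IsScalarTower F (ZeroMulAlg F) (ZeroMulAlg F) := ⟨fun c _ _ => (smul_zero c).symm⟩

def GrAlg.zeroMul : GrAlg F where
  A := ZeroMulAlg F
  G := PUnit
  comp _ := ⊤
  mul_mem _ _ _ _ _ _ := trivial
  independent := iSupIndep_subsingleton _
  spans := iSup_const

lemma GrAlg.zeroMul_univRels : (GrAlg.zeroMul F).univRels = ∅ :=
  Set.eq_empty_of_forall_notMem fun _ ⟨_, _, _, ⟨a, _, b, _, hab⟩, _⟩ =>
    hab (ZeroMulAlg.mul_eq_zero F a b)

instance : Nontrivial (GrAlg.zeroMul F).univGroup :=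
  (GrAlg.zeroMul F).nontrivial_univGroup_of_univRels_eq_empty (GrAlg.zeroMul_univRels F)
    ⟨PUnit.unit, top_ne_bot (α := Submodule F (ZeroMulAlg F))⟩

variable {F}

lemma LeftAdjointDataR.subsingleton_K (D : LeftAdjointDataR F) (H : Type u) [Group H] :
    Subsingleton (D.K H).A :=
  (D.K H).subsingleton_of_forall_comp_eq_bot ((D.θ H (GrAlg.zero F)).symm 1).comp_eq_bot

lemma LeftAdjointDataR.subsingleton_monoidHom (D : LeftAdjointDataR F) (H : Type u) [Group H]
    (X : GrAlg F) : Subsingleton (H →* X.univGroup) :=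
  have := D.subsingleton_K H
  (D.θ H X).symm.subsingleton

/-- The universal grading group functor `R : tilde{GrAlg_F} → Grp` has no left adjoint. -/
theorem no_left_adjoint_R (F : Type u) [Field F] : ¬ Nonempty (LeftAdjointDataR F) := by
  rintro ⟨D⟩
  let X := GrAlg.zeroMul F
  have := D.subsingleton_monoidHom X.univGroup X
  obtain ⟨x, hx⟩ := exists_ne (1 : X.univGroup)
  exact hx (DFunLike.congr_fun (Subsingleton.elim (MonoidHom.id _) 1) x)

end Statement
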